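/- arXiv:2207.05611 — 7 statements merged into one kernel-verified Lean document; each statement's English description precedes it below -/
import Mathlib

section
/- Assume g = tr(B R_x Bᴴ) > 0, α ≠ 0, and a − |c|²/g > 0, where a = tr(Ḃ R_x Ḃᴴ) and c = tr(B R_x Ḃᴴ). Then the Fisher information matrix F̃ is invertible, and its inverse satisfies (F̃⁻¹)₁₁ = σ² / ( 2T|α|² · ( tr(Ḃ R_x Ḃᴴ) − |tr(B R_x Ḃᴴ)|² / tr(B R_x Bᴴ) ) ). (This is the closed-form Cramér–Rao bound CRB(θ) of Lemma 1.) -/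
/-!
`F̃` is `2T/σ²` times the arrowhead matrix `!![|α|²a, x, y; x, g, 0; y, 0, g]` with
`x = Re(conj α · c)`, `y = −Im(conj α · c)`. Its `(0,0)` cofactor is `g²` and its determinant is
`g (|α|² a g − x² − y²) = g² |α|² (a − |c|²/g)`, since `x² + y² = |α|²|c|²`; so the `(0,0)` entry of
the inverse is the reciprocal of the Schur complement `(2T/σ²) |α|² (a − |c|²/g)`.
-/

open Matrix
open scoped ComplexOrder

section Arrowhead

variable {K : Type*} [Field K]

theorem det_arrowhead (p x y g h : K) :
    (!![p, x, y; x, g, 0; y, 0, h]).det = p * g * h - x ^ 2 * h - y ^ 2 * g := by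
  rw [det_fin_three]
  simp only [Fin.isValue, of_apply, cons_val', cons_val_zero, cons_val_fin_one, cons_val_one,
    cons_val, mul_zero, sub_zero, zero_mul, add_zero]
  ring

theorem inv_arrowhead_zero_zero (p x y g h : K) :
    (!![p, x, y; x, g, 0; y, 0, h])⁻¹ 0 0 = g * h / (!![p, x, y; x, g, 0; y, 0, h]).det := by
  rw [inv_def, Matrix.smul_apply, adjugate_fin_three, Ring.inverse_eq_inv]
  simp [div_eq_inv_mul]

end Arrowhead

theorem crb_point_target_lemma1_general
    (T σ : ℝ) (hT : 0 < T) (hσ : 0 < σ)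
    (α : ℂ)
    (a g : ℝ) (c : ℂ)
    (hgpos : 0 < g)
    (hα : α ≠ 0)
    (hpos : 0 < a - Complex.normSq c / g)
    (F : Matrix (Fin 3) (Fin 3) ℝ)
    (hF : F = (2 * T / σ ^ 2) •
      !![Complex.normSq α * a, (starRingEnd ℂ α * c).re, -((starRingEnd ℂ α * c).im);
         (starRingEnd ℂ α * c).re, g, 0;
         -((starRingEnd ℂ α * c).im), 0, g]) :
    IsUnit F.det ∧
      F⁻¹ 0 0 = σ ^ 2 / (2 * T * Complex.normSq α * (a - Complex.normSq c / g)) := by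
  set z := starRingEnd ℂ α * c with hz_def
  set k := 2 * T / σ ^ 2
  set A := !![Complex.normSq α * a, z.re, -z.im; z.re, g, 0; -z.im, 0, g]
  have hk : 0 < k := by positivity
  have hαsq : 0 < Complex.normSq α := Complex.normSq_pos.2 hα
  have hz : z.re ^ 2 * g + (-z.im) ^ 2 * g = Complex.normSq α * Complex.normSq c * g := by
    rw [← add_mul, neg_sq, sq, sq, ← Complex.normSq_apply, hz_def, Complex.normSq_mul,
      Complex.normSq_conj]
  have hdetA : A.det = g ^ 2 * Complex.normSq α * (a - Complex.normSq c / g) := by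
    rw [det_arrowhead, sub_sub, hz]
    field_simp
  have hA : IsUnit A.det := isUnit_iff_ne_zero.2 (by rw [hdetA]; positivity)
  have hkA : (k • A)⁻¹ = k⁻¹ • A⁻¹ := by
    have := invertibleOfNonzero hk.ne'
    rw [inv_smul A k hA, invOf_eq_inv]
  refine ⟨?_, ?_⟩
  · rw [hF, det_smul]
    exact (isUnit_iff_ne_zero.2 (by positivity)).mul hA
  · have hD := hpos.ne'
    rw [hF, hkA, Matrix.smul_apply, inv_arrowhead_zero_zero, hdetA, smul_eq_mul]
    simp only [k]
    field_simp

theorem crb_point_target_lemma1 {M : ℕ}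
    (T σ : ℝ) (hT : 0 < T) (hσ : 0 < σ)
    (α : ℂ)
    (B Bd Rx : Matrix (Fin M) (Fin M) ℂ)
    (hRx : Rx.PosSemidef)
    (a g : ℝ) (c : ℂ)
    (ha : (a : ℂ) = Matrix.trace (Bd * Rx * Bdᴴ))
    (hg : (g : ℂ) = Matrix.trace (B * Rx * Bᴴ))
    (hc : c = Matrix.trace (B * Rx * Bdᴴ))
    (hgpos : 0 < g)
    (hα : α ≠ 0)
    (hpos : 0 < a - Complex.normSq c / g)
    (F : Matrix (Fin 3) (Fin 3) ℝ)
    (hF : F = (2 * T / σ ^ 2) •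
      !![Complex.normSq α * a, (starRingEnd ℂ α * c).re, -((starRingEnd ℂ α * c).im);
         (starRingEnd ℂ α * c).re, g, 0;
         -((starRingEnd ℂ α * c).im), 0, g]) :
    IsUnit F.det ∧
      F⁻¹ 0 0 = σ ^ 2 / (2 * T * Complex.normSq α * (a - Complex.normSq c / g)) :=
  crb_point_target_lemma1_general T σ hT hσ α a g c hgpos hα hpos F hF
end

section
/- Suppose vᴴR₁v > 0 and vᴴR₂v > 0 (these quadratic forms are real since R₁ and R₂ are Hermitian positive semidefinite). Then tr(B R_x Bᴴ) = (vᴴR₁v)·(vᴴR₂v), and the following identity holds: tr(Ḃ R_x Ḃᴴ) − |tr(B R_x Ḃᴴ)|² / tr(B R_x Bᴴ) = κ² · [ (vᴴR₂v)·( vᴴD R₁ D v − |vᴴD R₁ v|²/(vᴴR₁v) ) + (vᴴR₁v)·( vᴴD R₂ D v − |vᴴD R₂ v|²/(vᴴR₂v) ) ]. (This is the re-expression of the Cramér–Rao bound for DoA estimation in terms of the reflective beamforming vector v, equation (17) of the paper.) -/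
open Matrix
open scoped ComplexOrder

section CRBHelpers

private lemma crb_aux1 {M : ℕ} (x y : Fin M → ℂ) (C : Matrix (Fin M) (Fin M) ℂ) :
    Matrix.trace (Matrix.vecMulVec x y * C) = y ⬝ᵥ C *ᵥ x := by
  simp only [Matrix.trace, Matrix.diag_apply, Matrix.mul_apply, Matrix.vecMulVec_apply,
    dotProduct, Matrix.mulVec, Finset.mul_sum]
  rw [Finset.sum_comm]
  exact Finset.sum_congr rfl fun i _ => Finset.sum_congr rfl fun j _ => by ring

private lemma crb_aux2 {M : ℕ} (z w x : Fin M → ℂ) :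
    (Matrix.vecMulVec z w)ᴴ *ᵥ x = (star z ⬝ᵥ x) • star w := by
  funext i
  simp only [Matrix.mulVec, dotProduct, Matrix.conjTranspose_apply, Matrix.vecMulVec_apply,
    star_mul', Pi.smul_apply, Pi.star_apply, smul_eq_mul, Finset.sum_mul]
  exact Finset.sum_congr rfl fun j _ => by ring

/-- trace of rank-one sandwich -/
private lemma crb_trace_rank_one {M : ℕ} (x y z w : Fin M → ℂ) (R : Matrix (Fin M) (Fin M) ℂ) :
    Matrix.trace (Matrix.vecMulVec x y * R * (Matrix.vecMulVec z w)ᴴ)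
      = (star z ⬝ᵥ x) * (y ⬝ᵥ R *ᵥ star w) := by
  rw [Matrix.mul_assoc, crb_aux1, ← Matrix.mulVec_mulVec, crb_aux2, Matrix.mulVec_smul,
    dotProduct_smul, smul_eq_mul]

/-- conjugate swap for quadratic forms -/
private lemma crb_cs {N : ℕ} (Mm : Matrix (Fin N) (Fin N) ℂ) (x y : Fin N → ℂ) :
    star (star x ⬝ᵥ Mm *ᵥ y) = star y ⬝ᵥ Mmᴴ *ᵥ x := by
  rw [star_dotProduct, star_star, Matrix.star_mulVec, dotProduct_mulVec]

private lemma crb_Slem {N M : ℕ} (C : Matrix (Fin M) (Fin N) ℂ) (u w : Fin N → ℂ) :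
    star (C *ᵥ u) ⬝ᵥ (C *ᵥ w) = star u ⬝ᵥ (Cᴴ * C) *ᵥ w := by
  rw [Matrix.star_mulVec, ← Matrix.mulVec_mulVec, dotProduct_mulVec, Matrix.vecMul_vecMul,
    ← dotProduct_mulVec, Matrix.mulVec_mulVec]

private lemma crb_conj_vecMul {N : ℕ} (R : Matrix (Fin N) (Fin N) ℂ) (x : Fin N → ℂ) :
    x ᵥ* Rᴴ = R.map (starRingEnd ℂ) *ᵥ x := by
  funext i
  simp [Matrix.vecMul, Matrix.mulVec, dotProduct, Matrix.conjTranspose_apply,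
    Matrix.map_apply, mul_comm]

private lemma crb_Tlem {N M : ℕ} (C : Matrix (Fin M) (Fin N) ℂ) (R : Matrix (Fin M) (Fin M) ℂ)
    (u w : Fin N → ℂ) :
    (C *ᵥ u) ⬝ᵥ R *ᵥ star (C *ᵥ w)
      = star (star u ⬝ᵥ (Cᴴ * R.map (starRingEnd ℂ) * C) *ᵥ w) := by
  have h1 : star ((C *ᵥ u) ⬝ᵥ R *ᵥ star (C *ᵥ w))
      = star u ⬝ᵥ (Cᴴ * R.map (starRingEnd ℂ) * C) *ᵥ w := by
    rw [dotProduct_comm, ← star_dotProduct_star]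
    simp only [Matrix.star_mulVec, Matrix.star_vecMul, star_star,
      Matrix.conjTranspose_conjTranspose, crb_conj_vecMul, Matrix.mulVec_mulVec,
      dotProduct_mulVec, Matrix.vecMul_vecMul, Matrix.mul_assoc]
  rw [← h1, star_star]

private lemma crb_dvec {N : ℕ} (D X : Matrix (Fin N) (Fin N) ℂ) (hDH : Dᴴ = D)
    (v w : Fin N → ℂ) :
    star (D *ᵥ v) ⬝ᵥ X *ᵥ w = star v ⬝ᵥ (D * X) *ᵥ w := by
  rw [Matrix.star_mulVec, hDH, dotProduct_mulVec, Matrix.vecMul_vecMul,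
    ← dotProduct_mulVec]

end CRBHelpers

/- STATEMENT 1: Re-expression of the CRB numerator in terms of the reflective
beamforming vector v (equation (17) of the paper). -/
theorem crb_reflective_reexpression {N M : ℕ}
    (G : Matrix (Fin N) (Fin M) ℂ)
    (d : Fin N → ℂ) (A : Matrix (Fin N) (Fin N) ℂ) (hA : A = Matrix.diagonal d)
    (D : Matrix (Fin N) (Fin N) ℂ)
    (hD : D = Matrix.diagonal (fun i : Fin N => (i : ℂ)))
    (v : Fin N → ℂ) (κ : ℝ)
    (Rx : Matrix (Fin M) (Fin M) ℂ) (hRx : Rx.PosSemidef)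
    (b bd : Fin M → ℂ)
    (hb : b = (Gᵀ * A) *ᵥ v)
    (hbd : bd = (Complex.I * (κ : ℂ)) • ((Gᵀ * A * D) *ᵥ v))
    (B Bd : Matrix (Fin M) (Fin M) ℂ) (R1 R2 : Matrix (Fin N) (Fin N) ℂ)
    (hB : B = Matrix.vecMulVec b b)
    (hBd : Bd = Matrix.vecMulVec bd b + Matrix.vecMulVec b bd)
    (hR1 : R1 = Aᴴ * G.map (starRingEnd ℂ) * Gᵀ * A)
    (hR2 : R2 = Aᴴ * G.map (starRingEnd ℂ) * Rx.map (starRingEnd ℂ) * Gᵀ * A)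
    (q1 q2 : ℝ)
    (hq1 : (q1 : ℂ) = star v ⬝ᵥ (R1 *ᵥ v)) (hq1pos : 0 < q1)
    (hq2 : (q2 : ℂ) = star v ⬝ᵥ (R2 *ᵥ v)) (hq2pos : 0 < q2) :
    Matrix.trace (B * Rx * Bᴴ) = (q1 : ℂ) * (q2 : ℂ) ∧
    Matrix.trace (Bd * Rx * Bdᴴ)
        - (Complex.normSq (Matrix.trace (B * Rx * Bdᴴ)) : ℂ)
          / Matrix.trace (B * Rx * Bᴴ)
      = ((κ : ℂ) ^ 2) *
        ((q2 : ℂ) * (star v ⬝ᵥ ((D * R1 * D) *ᵥ v)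
            - (Complex.normSq (star v ⬝ᵥ ((D * R1) *ᵥ v)) : ℂ) / (q1 : ℂ))
        + (q1 : ℂ) * (star v ⬝ᵥ ((D * R2 * D) *ᵥ v)
            - (Complex.normSq (star v ⬝ᵥ ((D * R2) *ᵥ v)) : ℂ) / (q2 : ℂ))) := by
  obtain ⟨C, hC⟩ : ∃ X : Matrix (Fin M) (Fin N) ℂ, X = Gᵀ * A := ⟨_, rfl⟩
  obtain ⟨μ, hμ⟩ : ∃ z : ℂ, z = Complex.I * (κ : ℂ) := ⟨_, rfl⟩
  obtain ⟨u1, hu1⟩ : ∃ u : Fin N → ℂ, u = D *ᵥ v := ⟨_, rfl⟩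
  -- basic matrix facts
  have hGt : (Gᵀ)ᴴ = G.map (starRingEnd ℂ) := by
    ext i j; simp [Matrix.conjTranspose_apply, Matrix.map_apply]
  have hDH : Dᴴ = D := by
    have hfun : (star fun i : Fin N => ((i : ℂ))) = fun i : Fin N => ((i : ℂ)) := by
      funext i
      simp only [Pi.star_apply, star_natCast]
    rw [hD, Matrix.diagonal_conjTranspose, hfun]
  have hR1C : Cᴴ * C = R1 := by
    simp only [hR1, hC, Matrix.conjTranspose_mul, hGt, Matrix.mul_assoc]
  have happ : ∀ i j, star (Rx j i) = Rx i j := fun i j => by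
    rw [← Matrix.conjTranspose_apply, hRx.1]
  have hRxm : (Rx.map (starRingEnd ℂ))ᴴ = Rx.map (starRingEnd ℂ) := by
    ext i j
    simp only [Matrix.conjTranspose_apply, Matrix.map_apply]
    calc star ((starRingEnd ℂ) (Rx j i)) = Rx j i := star_star _
      _ = star (Rx i j) := (happ j i).symm
      _ = (starRingEnd ℂ) (Rx i j) := rfl
  have hR2C : Cᴴ * Rx.map (starRingEnd ℂ) * C = R2 := by
    simp only [hR2, hC, Matrix.conjTranspose_mul, hGt, Matrix.mul_assoc]
  have hR1H : R1ᴴ = R1 := by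
    rw [← hR1C, Matrix.conjTranspose_mul, Matrix.conjTranspose_conjTranspose]
  have hR2H : R2ᴴ = R2 := by
    simp only [← hR2C, Matrix.conjTranspose_mul, Matrix.conjTranspose_conjTranspose,
      hRxm, Matrix.mul_assoc]
  -- vectors
  have hbC : b = C *ᵥ v := by rw [hC]; exact hb
  have hbdC : bd = μ • (C *ᵥ u1) := by
    rw [hμ, hC, hu1, Matrix.mulVec_mulVec]; exact hbd
  -- scalar abbreviations
  obtain ⟨m1, hm1⟩ : ∃ z : ℂ, z = star v ⬝ᵥ (D * R1) *ᵥ v := ⟨_, rfl⟩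
  obtain ⟨n1, hn1⟩ : ∃ z : ℂ, z = star v ⬝ᵥ (D * R1 * D) *ᵥ v := ⟨_, rfl⟩
  obtain ⟨m2, hm2⟩ : ∃ z : ℂ, z = star v ⬝ᵥ (D * R2) *ᵥ v := ⟨_, rfl⟩
  obtain ⟨n2, hn2⟩ : ∃ z : ℂ, z = star v ⬝ᵥ (D * R2 * D) *ᵥ v := ⟨_, rfl⟩
  rw [← hm1, ← hn1, ← hm2, ← hn2]
  -- S values
  have hS00 : star b ⬝ᵥ b = (q1 : ℂ) := by rw [hbC, crb_Slem, hR1C, ← hq1]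
  have hS10 : star (C *ᵥ u1) ⬝ᵥ (C *ᵥ v) = m1 := by
    rw [crb_Slem, hR1C, hu1, crb_dvec D R1 hDH, hm1]
  have hS01 : star (C *ᵥ v) ⬝ᵥ (C *ᵥ u1) = star m1 := by
    rw [crb_Slem, hR1C, hu1, Matrix.mulVec_mulVec, hm1, crb_cs,
      Matrix.conjTranspose_mul, hDH, hR1H]
  have hS11 : star (C *ᵥ u1) ⬝ᵥ (C *ᵥ u1) = n1 := by
    rw [crb_Slem, hR1C, hu1, Matrix.mulVec_mulVec, crb_dvec D (R1 * D) hDH, hn1,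
      Matrix.mul_assoc]
  -- T values
  have hT00 : (C *ᵥ v) ⬝ᵥ Rx *ᵥ star (C *ᵥ v) = (q2 : ℂ) := by
    rw [crb_Tlem, hR2C, ← hq2, Complex.star_def, Complex.conj_ofReal]
  have hT10 : (C *ᵥ u1) ⬝ᵥ Rx *ᵥ star (C *ᵥ v) = star m2 := by
    rw [crb_Tlem, hR2C, hu1, crb_dvec D R2 hDH, hm2]
  have hT01 : (C *ᵥ v) ⬝ᵥ Rx *ᵥ star (C *ᵥ u1) = m2 := by
    rw [crb_Tlem, hR2C, hu1, Matrix.mulVec_mulVec]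
    have h := crb_cs (D * R2) v v
    rw [Matrix.conjTranspose_mul, hDH, hR2H] at h
    rw [← hm2] at h
    rw [← h, star_star]
  have hT11 : (C *ᵥ u1) ⬝ᵥ Rx *ᵥ star (C *ᵥ u1) = n2 := by
    rw [crb_Tlem, hR2C, hu1, Matrix.mulVec_mulVec, crb_dvec D (R2 * D) hDH,
      ← Matrix.mul_assoc]
    have h := crb_cs (D * R2 * D) v v
    rw [Matrix.conjTranspose_mul, Matrix.conjTranspose_mul, hDH, hR2H,
      Matrix.mul_assoc] at h
    rw [← Matrix.mul_assoc] at h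
    rw [← hn2] at h ⊢
    exact h
  -- scalar μ facts
  have hμμ : star μ * μ = (κ : ℂ) ^ 2 := by
    rw [hμ, Complex.star_def, _root_.map_mul, Complex.conj_I, Complex.conj_ofReal]
    have h : Complex.I * Complex.I = -1 := Complex.I_mul_I
    linear_combination (-(κ:ℂ)^2) * h
  -- dot products with b, bd
  have hstarbd : star bd = star μ • star (C *ᵥ u1) := by
    rw [hbdC]; funext i; simp [star_mul', mul_comm]
  have d1 : star b ⬝ᵥ b = (q1 : ℂ) := hS00
  have e1 : b ⬝ᵥ Rx *ᵥ star b = (q2 : ℂ) := by rw [hbC, hT00]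
  have d2 : star bd ⬝ᵥ b = star μ * m1 := by
    rw [hstarbd, hbC, smul_dotProduct, smul_eq_mul, hS10]
  have d3 : star b ⬝ᵥ bd = μ * star m1 := by
    rw [hbdC, hbC, dotProduct_smul, smul_eq_mul, hS01]
  have d4 : star bd ⬝ᵥ bd = (κ : ℂ) ^ 2 * n1 := by
    rw [hstarbd, hbdC, smul_dotProduct, dotProduct_smul, smul_eq_mul, smul_eq_mul, hS11,
      ← mul_assoc, hμμ]
  have e2 : bd ⬝ᵥ Rx *ᵥ star b = μ * star m2 := by
    rw [hbdC, hbC, smul_dotProduct, smul_eq_mul, hT10]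
  have e3 : b ⬝ᵥ Rx *ᵥ star bd = star μ * m2 := by
    rw [hbC, hstarbd, Matrix.mulVec_smul, dotProduct_smul, smul_eq_mul, hT01]
  have e4 : bd ⬝ᵥ Rx *ᵥ star bd = (κ : ℂ) ^ 2 * n2 := by
    rw [hstarbd, hbdC, Matrix.mulVec_smul, smul_dotProduct, dotProduct_smul,
      smul_eq_mul, smul_eq_mul, hT11, ← mul_assoc, mul_comm μ (star μ), hμμ]
  -- traces
  have tr1 : Matrix.trace (B * Rx * Bᴴ) = (q1 : ℂ) * (q2 : ℂ) := by
    rw [hB, crb_trace_rank_one, d1, e1]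
  have tr2 : Matrix.trace (B * Rx * Bdᴴ) = star μ * (m1 * (q2 : ℂ) + (q1 : ℂ) * m2) := by
    rw [hB, hBd]
    simp only [Matrix.conjTranspose_add, Matrix.mul_add, Matrix.trace_add,
      crb_trace_rank_one]
    rw [d2, e1, d1, e3]
    ring
  have tr3 : Matrix.trace (Bd * Rx * Bdᴴ)
      = (κ : ℂ) ^ 2 * (n1 * (q2 : ℂ) + star m1 * m2 + m1 * star m2 + (q1 : ℂ) * n2) := by
    rw [hBd]
    simp only [Matrix.conjTranspose_add, Matrix.add_mul, Matrix.mul_add, Matrix.trace_add,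
      crb_trace_rank_one]
    rw [d4, e1, d2, e2, d3, e3, d1, e4]
    have h1 : (μ * star m1) * (star μ * m2) = (κ : ℂ) ^ 2 * (star m1 * m2) := by
      rw [← hμμ]; ring
    have h2 : (star μ * m1) * (μ * star m2) = (κ : ℂ) ^ 2 * (m1 * star m2) := by
      rw [← hμμ]; ring
    linear_combination h1 + h2
  -- normSq facts
  have hns : ∀ z : ℂ, (Complex.normSq z : ℂ) = z * star z := fun z => by
    rw [Complex.star_def, Complex.mul_conj]
  have hq1ne : (q1 : ℂ) ≠ 0 := Complex.ofReal_ne_zero.mpr (ne_of_gt hq1pos)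
  have hq2ne : (q2 : ℂ) ≠ 0 := Complex.ofReal_ne_zero.mpr (ne_of_gt hq2pos)
  have hsq1 : star ((q1 : ℝ) : ℂ) = ((q1 : ℝ) : ℂ) := by
    rw [Complex.star_def, Complex.conj_ofReal]
  have hsq2 : star ((q2 : ℝ) : ℂ) = ((q2 : ℝ) : ℂ) := by
    rw [Complex.star_def, Complex.conj_ofReal]
  have hstartr2 : star (Matrix.trace (B * Rx * Bdᴴ))
      = μ * (star m1 * (q2 : ℂ) + (q1 : ℂ) * star m2) := by
    rw [tr2, star_mul', star_add, star_mul', star_mul', star_star, hsq1, hsq2]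
  refine ⟨tr1, ?_⟩
  rw [hns (Matrix.trace (B * Rx * Bdᴴ)), hstartr2, tr2, tr3, tr1, hns m1, hns m2]
  have hkey : star μ * (m1 * (q2 : ℂ) + (q1 : ℂ) * m2)
      * (μ * (star m1 * (q2 : ℂ) + (q1 : ℂ) * star m2))
      = (κ : ℂ) ^ 2 * ((m1 * (q2 : ℂ) + (q1 : ℂ) * m2)
        * (star m1 * (q2 : ℂ) + (q1 : ℂ) * star m2)) := by
    rw [← hμμ]; ring
  rw [hkey]
  field_simp
  ring
end

section
/- With B = b bᵀ, Ḃ = ḃ bᵀ + b ḃᵀ, R_x = P Pᴴ, u = Pᵀ b and w = Pᵀ ḃ, the determinant of the Fisher information matrix F̃ satisfies det(F̃) = (8T³|α|²/σ⁶) · ‖b‖² ‖u‖² · [ ‖u‖⁴·( ‖ḃ‖²‖b‖² − |ḃᴴb|² ) + ‖b‖⁴·( ‖w‖²‖u‖² − |wᴴu|² ) ]. (This is the determinant expansion used in the proof of Proposition 1; the paper's equation (57) states this expansion, here with the factor tr(B R_x Bᴴ) = ‖b‖²‖u‖² made explicit.) -/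
open Matrix
open scoped ComplexOrder

lemma vvv_mul {n : ℕ} (x y : Fin n → ℂ) (A : Matrix (Fin n) (Fin n) ℂ) :
    vecMulVec x y * A = vecMulVec x (y ᵥ* A) := by
  ext i j
  simp [Matrix.mul_apply, vecMulVec_apply, Matrix.vecMul, dotProduct, Finset.mul_sum, mul_assoc]

lemma vvv_mul_vvv {n : ℕ} (x y z t : Fin n → ℂ) :
    vecMulVec x y * vecMulVec z t = (y ⬝ᵥ z) • vecMulVec x t := by
  ext i j
  simp only [Matrix.mul_apply, vecMulVec_apply, dotProduct, Matrix.smul_apply, smul_eq_mul,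
    Finset.sum_mul]
  refine Finset.sum_congr rfl fun k _ => ?_
  ring

lemma trace_vvv1 {n : ℕ} (x t : Fin n → ℂ) :
    Matrix.trace (vecMulVec x t) = t ⬝ᵥ x := by
  simp [Matrix.trace, Matrix.diag, vecMulVec_apply, dotProduct, mul_comm]

lemma trace_vvv {n : ℕ} (x y z t : Fin n → ℂ) (A : Matrix (Fin n) (Fin n) ℂ) :
    Matrix.trace (vecMulVec x y * A * vecMulVec z t) = (y ⬝ᵥ (A *ᵥ z)) * (t ⬝ᵥ x) := by
  rw [vvv_mul, vvv_mul_vvv, trace_smul, trace_vvv1, dotProduct_mulVec, smul_eq_mul]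

lemma conjT_vvv {n : ℕ} (x y : Fin n → ℂ) :
    (vecMulVec x y)ᴴ = vecMulVec (star y) (star x) := by
  ext i j
  simp [vecMulVec_apply, Matrix.conjTranspose_apply, mul_comm]

lemma dot_PPH {n : ℕ} (P : Matrix (Fin n) (Fin n) ℂ) (y z : Fin n → ℂ) :
    y ⬝ᵥ ((P * Pᴴ) *ᵥ star z) = (Pᵀ *ᵥ y) ⬝ᵥ star (Pᵀ *ᵥ z) := by
  rw [dotProduct_mulVec, ← vecMul_vecMul, ← mulVec_transpose P y, ← dotProduct_mulVec]
  congr 1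
  rw [star_mulVec, ← mulVec_transpose]
  congr 1

lemma dot_conj {n : ℕ} (x y : Fin n → ℂ) :
    star x ⬝ᵥ y = starRingEnd ℂ (star y ⬝ᵥ x) := by
  simp [dotProduct, map_sum, mul_comm]

lemma dot_self_real {n : ℕ} (x : Fin n → ℂ) :
    ((star x ⬝ᵥ x).re : ℂ) = star x ⬝ᵥ x := by
  rw [← Complex.conj_eq_iff_re]
  simp [dotProduct, map_sum, mul_comm]

lemma dot_self_im {n : ℕ} (x : Fin n → ℂ) : (star x ⬝ᵥ x).im = 0 := by
  rw [← dot_self_real x]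
  exact Complex.ofReal_im _

theorem fim_det_expansion {M : ℕ}
    (T σ : ℝ) (hT : 0 < T) (hσ : 0 < σ)
    (α : ℂ)
    (b bd : Fin M → ℂ) (P : Matrix (Fin M) (Fin M) ℂ)
    (B Bd Rx : Matrix (Fin M) (Fin M) ℂ)
    (hB : B = Matrix.vecMulVec b b)
    (hBd : Bd = Matrix.vecMulVec bd b + Matrix.vecMulVec b bd)
    (hRx : Rx = P * Pᴴ)
    (u w : Fin M → ℂ)
    (hu : u = Pᵀ *ᵥ b) (hw : w = Pᵀ *ᵥ bd)
    (a g : ℝ) (c : ℂ)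
    (ha : (a : ℂ) = Matrix.trace (Bd * Rx * Bdᴴ))
    (hg : (g : ℂ) = Matrix.trace (B * Rx * Bᴴ))
    (hc : c = Matrix.trace (B * Rx * Bdᴴ))
    (F : Matrix (Fin 3) (Fin 3) ℝ)
    (hF : F = (2 * T / σ ^ 2) •
      !![Complex.normSq α * a, (starRingEnd ℂ α * c).re, -((starRingEnd ℂ α * c).im);
         (starRingEnd ℂ α * c).re, g, 0;
         -((starRingEnd ℂ α * c)).im, 0, g]) :
    F.det = (8 * T ^ 3 * Complex.normSq α / σ ^ 6) *
      ((star b ⬝ᵥ b).re * (star u ⬝ᵥ u).re *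
        ((star u ⬝ᵥ u).re ^ 2 *
            ((star bd ⬝ᵥ bd).re * (star b ⬝ᵥ b).re - Complex.normSq (star bd ⬝ᵥ b))
        + (star b ⬝ᵥ b).re ^ 2 *
            ((star w ⬝ᵥ w).re * (star u ⬝ᵥ u).re - Complex.normSq (star w ⬝ᵥ u)))) := by
  set p : ℂ := star bd ⬝ᵥ b with hp
  set q : ℂ := star w ⬝ᵥ u with hq
  set nb : ℝ := (star b ⬝ᵥ b).re with hnb
  set nu : ℝ := (star u ⬝ᵥ u).re with hnu
  set nd : ℝ := (star bd ⬝ᵥ bd).re with hnd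
  set nw : ℝ := (star w ⬝ᵥ w).re with hnw
  -- complex trace identities
  have hg' : (g : ℂ) = (star u ⬝ᵥ u) * (star b ⬝ᵥ b) := by
    rw [hg, hB, hRx, conjT_vvv, trace_vvv, dot_PPH, ← hu, dotProduct_comm]
  have hc' : c = (star u ⬝ᵥ u) * p + q * (star b ⬝ᵥ b) := by
    rw [hc, hB, hBd, hRx, conjTranspose_add, conjT_vvv, conjT_vvv, mul_add, trace_add,
      trace_vvv, trace_vvv, dot_PPH, dot_PPH, ← hu, ← hw,
      dotProduct_comm u (star u), dotProduct_comm u (star w)]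
  have ha' : (a : ℂ) = (star u ⬝ᵥ u) * (star bd ⬝ᵥ bd)
      + q * starRingEnd ℂ p + starRingEnd ℂ q * p + (star w ⬝ᵥ w) * (star b ⬝ᵥ b) := by
    rw [ha, hBd, hRx, conjTranspose_add, conjT_vvv, conjT_vvv, add_mul, add_mul, mul_add,
      mul_add, trace_add, trace_add, trace_add, trace_vvv, trace_vvv, trace_vvv, trace_vvv,
      dot_PPH, dot_PPH, dot_PPH, dot_PPH, ← hu, ← hw,
      dotProduct_comm u (star u), dotProduct_comm u (star w), dotProduct_comm w (star u),
      dotProduct_comm w (star w), ← hq, dot_conj b bd, ← hp, ← dot_conj u w, dot_conj u w, ← hq]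
    ring
  -- real consequences
  have hgr : g = nu * nb := by
    have := congrArg Complex.re hg'
    simpa [Complex.mul_re, dot_self_im, ← hnu, ← hnb] using this
  have hcre : c.re = nu * p.re + q.re * nb := by
    have := congrArg Complex.re hc'
    simpa [Complex.mul_re, dot_self_im, ← hnu, ← hnb] using this
  have hcim : c.im = nu * p.im + q.im * nb := by
    have := congrArg Complex.im hc'
    simpa [Complex.mul_im, dot_self_im, ← hnu, ← hnb] using this
  have har : a = nu * nd + 2 * (q.re * p.re + q.im * p.im) + nw * nb := by
    have := congrArg Complex.re ha'
    simp only [Complex.add_re, Complex.mul_re, Complex.conj_re, Complex.conj_im, Complex.ofReal_re,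
      dot_self_im, ← hnu, ← hnb, ← hnd, ← hnw] at this
    rw [this]; ring
  have hσ6 : σ ≠ 0 := ne_of_gt hσ
  rw [hF, Matrix.det_smul, Matrix.det_fin_three]
  simp only [Matrix.smul_apply, Matrix.cons_val', Matrix.cons_val_zero, Matrix.cons_val_one,
    Matrix.head_cons, Matrix.empty_val', Matrix.cons_val_fin_one, Matrix.head_fin_const,
    Matrix.of_apply, Matrix.cons_val_two, Matrix.tail_cons, smul_eq_mul, Fintype.card_fin]
  rw [hgr, har]
  simp only [Complex.normSq_apply, Complex.mul_re, Complex.mul_im, Complex.conj_re,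
    Complex.conj_im, hcre, hcim]
  field_simp
  ring
end

section
/- If the N×M complex matrix G has rank at most 1, then det(F̃) = 0, i.e., the Fisher information matrix F̃ built from b = Gᵀ A v and ḃ = iκ Gᵀ A D v is singular for every choice of the diagonal matrices A and D, vector v, real κ, Hermitian positive semidefinite R_x, α ∈ ℂ, T > 0, and σ > 0. (Forward direction of Proposition 1: with a single propagation path between the AP and the IRS, the target's DoA is not estimable.) -/
open Matrix
open scoped ComplexOrder

lemma aux_dep_of_finrank_le_one {M : ℕ} {W : Submodule ℂ (Fin M → ℂ)}
    (hW : Module.finrank ℂ W ≤ 1) {x y : Fin M → ℂ}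
    (hx : x ∈ W) (hy : y ∈ W) (hx0 : x ≠ 0) : ∃ μ : ℂ, y = μ • x := by
  have hspan : (Submodule.span ℂ {x} : Submodule ℂ (Fin M → ℂ)) ≤ W := by
    rw [Submodule.span_le, Set.singleton_subset_iff]; exact hx
  have hfr : Module.finrank ℂ (Submodule.span ℂ {x}) = 1 :=
    finrank_span_singleton hx0
  have heq : (Submodule.span ℂ {x} : Submodule ℂ (Fin M → ℂ)) = W :=
    Submodule.eq_of_le_of_finrank_le hspan (by omega)
  have : y ∈ Submodule.span ℂ {x} := heq ▸ hy
  rcases Submodule.mem_span_singleton.mp this with ⟨μ, hμ⟩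
  exact ⟨μ, hμ.symm⟩

/- STATEMENT 3: Forward direction of Proposition 1.
If rank(G) ≤ 1 then the Fisher information matrix F̃ built from
b = Gᵀ A v, ḃ = iκ Gᵀ A D v is singular (det F̃ = 0), for every choice of
the diagonal matrices A and D, vector v, real κ, Hermitian PSD R_x,
α ∈ ℂ, T > 0, and σ > 0. -/
theorem fim_singular_of_rank_le_one {N M : ℕ}
    (T σ : ℝ) (hT : 0 < T) (hσ : 0 < σ)
    (α : ℂ)
    (G : Matrix (Fin N) (Fin M) ℂ)
    (hG : G.rank ≤ 1)
    (dA dD : Fin N → ℂ) (A D : Matrix (Fin N) (Fin N) ℂ)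
    (hA : A = Matrix.diagonal dA) (hD : D = Matrix.diagonal dD)
    (v : Fin N → ℂ) (κ : ℝ)
    (Rx : Matrix (Fin M) (Fin M) ℂ) (hRx : Rx.PosSemidef)
    (b bd : Fin M → ℂ)
    (hb : b = (Gᵀ * A) *ᵥ v)
    (hbd : bd = (Complex.I * (κ : ℂ)) • ((Gᵀ * A * D) *ᵥ v))
    (B Bd : Matrix (Fin M) (Fin M) ℂ)
    (hB : B = Matrix.vecMulVec b b)
    (hBd : Bd = Matrix.vecMulVec bd b + Matrix.vecMulVec b bd)
    (a g : ℝ) (c : ℂ)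
    (ha : (a : ℂ) = Matrix.trace (Bd * Rx * Bdᴴ))
    (hg : (g : ℂ) = Matrix.trace (B * Rx * Bᴴ))
    (hc : c = Matrix.trace (B * Rx * Bdᴴ))
    (F : Matrix (Fin 3) (Fin 3) ℝ)
    (hF : F = (2 * T / σ ^ 2) •
      !![Complex.normSq α * a, (starRingEnd ℂ α * c).re, -((starRingEnd ℂ α * c).im);
         (starRingEnd ℂ α * c).re, g, 0;
         -((starRingEnd ℂ α * c)).im, 0, g]) :
    F.det = 0 := by
  by_cases hb0 : b = 0
  · -- b = 0 : all quantities vanish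
    have hBz : B = 0 := by
      rw [hB, hb0]; ext i j; simp [Matrix.vecMulVec]
    have hBdz : Bd = 0 := by
      rw [hBd, hb0]; ext i j; simp [Matrix.vecMulVec]
    have hgz : g = 0 := by
      have : (g : ℂ) = 0 := by simp [hg, hBz]
      exact_mod_cast this
    have haz : a = 0 := by
      have : (a : ℂ) = 0 := by simp [ha, hBdz]
      exact_mod_cast this
    have hcz : c = 0 := by simp [hc, hBz]
    subst hF
    simp [Matrix.det_fin_three, hgz, haz, hcz]
  · -- b ≠ 0 : bd is a multiple of b
    have hrankT : Gᵀ.rank ≤ 1 := by rw [Matrix.rank_transpose]; exact hG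
    have hbmem : b ∈ LinearMap.range Gᵀ.mulVecLin := by
      refine ⟨A *ᵥ v, ?_⟩
      rw [hb, Matrix.mulVecLin_apply, Matrix.mulVec_mulVec]
    have hbdmem : bd ∈ LinearMap.range Gᵀ.mulVecLin := by
      have h1 : (Gᵀ * A * D) *ᵥ v = Gᵀ *ᵥ ((A * D) *ᵥ v) := by
        rw [Matrix.mulVec_mulVec, Matrix.mul_assoc]
      rw [hbd, h1]
      exact Submodule.smul_mem _ _ ⟨(A * D) *ᵥ v, rfl⟩
    obtain ⟨μ, hμ⟩ := aux_dep_of_finrank_le_one hrankT hbmem hbdmem hb0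
    -- Bd = (2μ) • B
    have hBd2 : Bd = (2 * μ) • B := by
      rw [hBd, hB, hμ]
      ext i j
      simp [Matrix.vecMulVec, Matrix.smul_apply]
      ring
    set w : ℂ := 2 * μ with hw
    have hac : (a : ℂ) = (Complex.normSq w : ℂ) * (g : ℂ) := by
      rw [ha, hBd2, hg]
      simp only [Matrix.conjTranspose_smul, Matrix.smul_mul, Matrix.mul_smul,
        Matrix.trace_smul, smul_smul, smul_eq_mul]
      have hws : star w * w = (Complex.normSq w : ℂ) := by
        rw [mul_comm]; exact Complex.mul_conj w
      rw [hws]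
    have hcc : c = (starRingEnd ℂ w) * (g : ℂ) := by
      rw [hc, hBd2, hg]
      simp only [Matrix.conjTranspose_smul, Matrix.mul_smul, Matrix.trace_smul,
        smul_eq_mul]
      rfl
    have hareal : a = Complex.normSq w * g := by
      have := hac
      rw [← Complex.ofReal_mul] at this
      exact_mod_cast this
    -- real and imaginary parts of ᾱ c
    set z : ℂ := starRingEnd ℂ α * starRingEnd ℂ w with hz
    have hre : (starRingEnd ℂ α * c).re = z.re * g := by
      rw [hcc, hz, ← mul_assoc]
      simp [Complex.mul_re]
    have him : (starRingEnd ℂ α * c).im = z.im * g := by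
      rw [hcc, hz, ← mul_assoc]
      simp [Complex.mul_im]
    have hnz : z.re ^ 2 + z.im ^ 2 = Complex.normSq α * Complex.normSq w := by
      have : Complex.normSq z = Complex.normSq α * Complex.normSq w := by
        rw [hz, Complex.normSq_mul, Complex.normSq_conj, Complex.normSq_conj]
      rw [← this, Complex.normSq_apply]; ring
    subst hF
    rw [Matrix.det_fin_three]
    simp only [Matrix.smul_apply, Matrix.cons_val', Matrix.cons_val_zero,
      Matrix.cons_val_one, Matrix.head_cons, Matrix.empty_val',
      Matrix.cons_val_fin_one, Matrix.head_fin_const, Matrix.cons_val_two,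
      Matrix.tail_cons, smul_eq_mul, Matrix.of_apply]
    rw [hre, him, hareal]
    linear_combination (-(2 * T / σ ^ 2) ^ 3 * g ^ 3) * hnz
end

section
/- Assume G Gᴴ and G R_x Gᴴ are invertible. Then the 2N²×2N² real Fisher information matrix F̂ = (2T/σ²)·R(M), where M = (conj(Φ) conj(G) R_xᵀ Gᵀ Φᵀ) ⊗ (conj(Φ) conj(G) Gᵀ Φᵀ) (Kronecker product of N²×N² size), is invertible and tr(F̂⁻¹) = (σ²/T) · tr( (G R_x Gᴴ)⁻¹ ) · tr( (G Gᴴ)⁻¹ ). (Lemma 2: the Cramér–Rao bound for estimating the target response matrix H equals (σ²/T)·tr((G R_x Gᴴ)⁻¹)·tr((G Gᴴ)⁻¹), independent of the reflective beamforming Φ.) -/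
open Matrix
open scoped ComplexOrder Kronecker

/-- The realification of a complex square matrix `M`:
the real block matrix [[Re M, −Im M], [Im M, Re M]]. -/
noncomputable def realify {n : Type*} [Fintype n] (M : Matrix n n ℂ) :
    Matrix (n ⊕ n) (n ⊕ n) ℝ :=
  Matrix.fromBlocks (M.map Complex.re) (-(M.map Complex.im))
    (M.map Complex.im) (M.map Complex.re)

/-! Realification is multiplicative with `tr R(M) = 2 Re tr M`, so `F̂⁻¹ = (σ²/2T) R(K⁻¹)` and
`tr F̂⁻¹ = (σ²/T) Re tr K⁻¹` for the Kronecker product `K`. Its two factors are the transposes of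
`Φ X Φᴴ` and `Φ Y Φᴴ` with `X = G R_x Gᴴ`, `Y = G Gᴴ`; since `Φ` is unitary it drops out of the
traces of the inverses, leaving `tr K⁻¹ = tr X⁻¹ · tr Y⁻¹`, a product of reals as `X`, `Y` are
Hermitian. -/

section Realify

variable {n : Type*} [Fintype n]

lemma map_re_mul (M N : Matrix n n ℂ) :
    (M * N).map Complex.re = M.map Complex.re * N.map Complex.re -
      M.map Complex.im * N.map Complex.im := by
  ext i j
  simp [Matrix.mul_apply, Complex.mul_re, Finset.sum_sub_distrib]

lemma map_im_mul (M N : Matrix n n ℂ) :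
    (M * N).map Complex.im = M.map Complex.re * N.map Complex.im +
      M.map Complex.im * N.map Complex.re := by
  ext i j
  simp [Matrix.mul_apply, Complex.mul_im, Finset.sum_add_distrib]

lemma realify_mul (M N : Matrix n n ℂ) :
    realify (M * N) = realify M * realify N := by
  simp only [realify, fromBlocks_multiply, map_re_mul, map_im_mul]
  congr 1 <;> first | noncomm_ring | abel

lemma realify_one [DecidableEq n] : realify (1 : Matrix n n ℂ) = 1 := by
  have hre : (1 : Matrix n n ℂ).map Complex.re = 1 := Matrix.map_one _ Complex.zero_re Complex.one_re
  have him : (1 : Matrix n n ℂ).map Complex.im = 0 := by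
    ext i j; by_cases h : i = j <;> simp [one_apply, h]
  rw [realify, hre, him, neg_zero, fromBlocks_one]

lemma trace_realify (M : Matrix n n ℂ) : trace (realify M) = 2 * (trace M).re := by
  simp only [realify, trace, diag, Fintype.sum_sum_type, fromBlocks_apply₁₁,
    fromBlocks_apply₂₂, map_apply, Complex.re_sum]
  ring

variable [DecidableEq n] {M : Matrix n n ℂ}

lemma realify_mul_realify_inv (hM : IsUnit M.det) : realify M * realify M⁻¹ = 1 := by
  rw [← realify_mul, mul_nonsing_inv M hM, realify_one]

end Realify

section UnitaryConj

variable {n α : Type*} [Fintype n] [DecidableEq n] [CommRing α] [StarRing α]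
  {U : Matrix n n α}

lemma inv_unitary_conj (hU : U ∈ unitaryGroup n α) (X : Matrix n n α) :
    (U * X * Uᴴ)⁻¹ = U * X⁻¹ * Uᴴ := by
  have hUinv : U⁻¹ = Uᴴ := inv_eq_left_inv ((mem_unitaryGroup_iff').1 hU)
  rw [Matrix.mul_inv_rev, Matrix.mul_inv_rev, ← conjTranspose_nonsing_inv, hUinv, conjTranspose_conjTranspose,
    Matrix.mul_assoc]

lemma trace_inv_unitary_conj (hU : U ∈ unitaryGroup n α) (X : Matrix n n α) :
    trace (U * X * Uᴴ)⁻¹ = trace X⁻¹ := by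
  rw [inv_unitary_conj hU, trace_mul_cycle, ← star_eq_conjTranspose,
    (mem_unitaryGroup_iff').1 hU, Matrix.one_mul]

lemma isUnit_det_unitary_conj (hU : U ∈ unitaryGroup n α) {X : Matrix n n α}
    (hX : IsUnit X.det) : IsUnit (U * X * Uᴴ).det := by
  have hUdet : IsUnit U.det := UnitaryGroup.det_isUnit ⟨U, hU⟩
  rw [det_mul, det_mul, det_conjTranspose]
  exact (hUdet.mul hX).mul hUdet.star

end UnitaryConj

lemma diagonal_mem_unitaryGroup {𝕜 n : Type*} [RCLike 𝕜] [Fintype n] [DecidableEq n]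
    {d : n → 𝕜} (hd : ∀ i, ‖d i‖ = 1) : diagonal d ∈ unitaryGroup n 𝕜 := by
  rw [mem_unitaryGroup_iff', star_eq_conjTranspose, diagonal_conjTranspose,
    diagonal_mul_diagonal, ← diagonal_one]
  congr 1
  funext i
  simp [RCLike.conj_mul, hd i]

lemma Matrix.IsHermitian.im_trace_eq_zero {n : Type*} [Fintype n] {A : Matrix n n ℂ}
    (hA : A.IsHermitian) : (trace A).im = 0 := by
  have h := trace_conjTranspose A
  rw [hA.eq] at h
  exact Complex.conj_eq_iff_im.1 h.symm

theorem crb_extended_target_lemma2 {N M : ℕ}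
    (T σ : ℝ) (hT : 0 < T) (hσ : 0 < σ)
    (G : Matrix (Fin N) (Fin M) ℂ)
    (Rx : Matrix (Fin M) (Fin M) ℂ) (hRx : Rx.PosSemidef)
    (φ : Fin N → ℂ) (hφ : ∀ i, ‖φ i‖ = 1)
    (Φ : Matrix (Fin N) (Fin N) ℂ) (hΦ : Φ = Matrix.diagonal φ)
    (hGG : IsUnit (G * Gᴴ).det)
    (hGRG : IsUnit (G * Rx * Gᴴ).det)
    (Fhat : Matrix ((Fin N × Fin N) ⊕ (Fin N × Fin N))
                   ((Fin N × Fin N) ⊕ (Fin N × Fin N)) ℝ)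
    (hFhat : Fhat = (2 * T / σ ^ 2) •
      realify ((Φ.map (starRingEnd ℂ) * G.map (starRingEnd ℂ) * Rxᵀ * Gᵀ * Φᵀ) ⊗ₖ
               (Φ.map (starRingEnd ℂ) * G.map (starRingEnd ℂ) * Gᵀ * Φᵀ))) :
    IsUnit Fhat.det ∧
      Matrix.trace Fhat⁻¹ =
        (σ ^ 2 / T) * (Matrix.trace ((G * Rx * Gᴴ)⁻¹)).re *
          (Matrix.trace ((G * Gᴴ)⁻¹)).re := by
  have hU : Φ ∈ unitaryGroup (Fin N) ℂ := hΦ ▸ diagonal_mem_unitaryGroup hφ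
  set X := G * Rx * Gᴴ
  set Y := G * Gᴴ
  have hA : Φ.map (starRingEnd ℂ) * G.map (starRingEnd ℂ) * Rxᵀ * Gᵀ * Φᵀ = (Φ * X * Φᴴ)ᵀ := by
    simp only [X, transpose_mul, conjTranspose_transpose, Matrix.mul_assoc]; rfl
  have hB : Φ.map (starRingEnd ℂ) * G.map (starRingEnd ℂ) * Gᵀ * Φᵀ = (Φ * Y * Φᴴ)ᵀ := by
    simp only [Y, transpose_mul, conjTranspose_transpose, Matrix.mul_assoc]; rfl
  set K := (Φ * X * Φᴴ)ᵀ ⊗ₖ (Φ * Y * Φᴴ)ᵀ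
  have hK : IsUnit K.det := by
    rw [det_kronecker, det_transpose, det_transpose]
    exact ((isUnit_det_unitary_conj hU hGRG).pow _).mul ((isUnit_det_unitary_conj hU hGG).pow _)
  have htrK : trace K⁻¹ = trace X⁻¹ * trace Y⁻¹ := by
    rw [inv_kronecker, trace_kronecker, ← transpose_nonsing_inv, ← transpose_nonsing_inv,
      trace_transpose, trace_transpose, trace_inv_unitary_conj hU, trace_inv_unitary_conj hU]
  have hc : 2 * T / σ ^ 2 ≠ 0 := by positivity
  have hright : Fhat * ((2 * T / σ ^ 2)⁻¹ • realify K⁻¹) = 1 := by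
    rw [hFhat, hA, hB, smul_mul_smul_comm, mul_inv_cancel₀ hc, one_smul,
      realify_mul_realify_inv hK]
  refine ⟨isUnit_det_of_right_inverse hright, ?_⟩
  have hXim := (isHermitian_mul_mul_conjTranspose G hRx.isHermitian).inv.im_trace_eq_zero
  have hYim := (isHermitian_mul_conjTranspose_self G).inv.im_trace_eq_zero
  rw [inv_eq_right_inv hright, trace_smul, trace_realify, htrK, Complex.mul_re, hXim, hYim,
    smul_eq_mul]
  field_simp
  ring
end

section
/- Assume R_x is Hermitian positive definite. Then the 2N²×2N² real Fisher information matrix F̂ = (2T/σ²)·R(M), where M = (conj(Φ) conj(G) R_xᵀ Gᵀ Φᵀ) ⊗ (conj(Φ) conj(G) Gᵀ Φᵀ), is invertible if and only if rank(G) = N. In particular, if rank(G) < N then F̂ is singular. (Proposition 2: the target response matrix is estimable only when the AP–IRS channel G has full row rank N.) -/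
open Matrix
open scoped ComplexOrder Kronecker

section aux
variable {n : Type*} [Fintype n] [DecidableEq n]

lemma det_realify (K : Matrix n n ℂ) :
    (realify K).det = Complex.normSq K.det := by
  have f := Complex.ofRealHom
  set A : Matrix n n ℂ := (K.map Complex.re).map Complex.ofRealHom with hA
  set B : Matrix n n ℂ := (K.map Complex.im).map Complex.ofRealHom with hB
  have hK1 : A + Complex.I • B = K := by
    ext i j
    simp [hA, hB, Matrix.map_apply, mul_comm, Complex.ext_iff]
  have hK2 : A - Complex.I • B = K.map (starRingEnd ℂ) := by
    ext i j
    simp [hA, hB, Matrix.map_apply, Complex.ext_iff]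
  have hnegB : (-(K.map Complex.im)).map (Complex.ofRealHom : ℝ →+* ℂ) = -B := by
    ext i j; simp [hB]
  have hmap : (realify K).map Complex.ofRealHom =
      Matrix.fromBlocks A (-B) B A := by
    rw [realify, Matrix.fromBlocks_map, hnegB, ← hA, ← hB]
  set L : Matrix (n ⊕ n) (n ⊕ n) ℂ :=
    Matrix.fromBlocks 1 (Complex.I • 1) 0 1 with hL
  set Rt : Matrix (n ⊕ n) (n ⊕ n) ℂ :=
    Matrix.fromBlocks 1 (-(Complex.I) • 1) 0 1 with hRt
  have key : L * ((realify K).map Complex.ofRealHom) * Rt =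
      Matrix.fromBlocks K 0 B (K.map (starRingEnd ℂ)) := by
    rw [hmap, hL, hRt, Matrix.fromBlocks_multiply, Matrix.fromBlocks_multiply,
      ← hK2, ← hK1, Matrix.fromBlocks_inj]
    refine ⟨?_, ?_, ?_, ?_⟩
    · simp [Matrix.smul_mul, Matrix.mul_smul]
    · simp only [Matrix.smul_mul, Matrix.mul_smul, Matrix.mul_neg, smul_add,
        smul_smul, Complex.I_mul_I, Matrix.one_mul, Matrix.mul_one,
        Matrix.zero_mul, Matrix.mul_zero, neg_smul, one_smul, add_zero,
        zero_add, neg_neg]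
      abel
    · simp
    · simp only [Matrix.mul_neg, Matrix.mul_smul, Matrix.mul_one,
        Matrix.zero_mul, Matrix.mul_zero, zero_add, add_zero, Matrix.one_mul]
      module
  have hdetL : L.det = 1 := by
    rw [hL, Matrix.det_fromBlocks_zero₂₁]; simp
  have hdetRt : Rt.det = 1 := by
    rw [hRt, Matrix.det_fromBlocks_zero₂₁]; simp
  have h1 : ((realify K).map Complex.ofRealHom).det
      = K.det * (starRingEnd ℂ) K.det := by
    have := congrArg Matrix.det key
    rw [Matrix.det_mul, Matrix.det_mul, hdetL, hdetRt, one_mul, mul_one,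
      Matrix.det_fromBlocks_zero₁₂] at this
    rw [this, RingHom.map_det, RingHom.mapMatrix_apply]
  rw [← RingHom.mapMatrix_apply, ← RingHom.map_det] at h1
  have h2 := h1.trans (Complex.mul_conj K.det)
  rw [Complex.ofRealHom_eq_coe] at h2
  exact_mod_cast h2

lemma rank_eq_card_iff_det_ne_zero (X : Matrix n n ℂ) :
    X.rank = Fintype.card n ↔ X.det ≠ 0 := by
  constructor
  · intro h
    rw [← isUnit_iff_ne_zero, ← Matrix.isUnit_iff_isUnit_det,
      ← Matrix.mulVec_surjective_iff_isUnit]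
    have htop : LinearMap.range X.mulVecLin = ⊤ := by
      apply Submodule.eq_top_of_finrank_eq
      rw [← Matrix.rank, h, Module.finrank_fintype_fun_eq_card]
    intro v
    exact LinearMap.range_eq_top.mp htop v
  · intro h
    exact Matrix.rank_of_isUnit X ((Matrix.isUnit_iff_isUnit_det X).mpr h.isUnit)

omit [DecidableEq n] in
lemma rank_map_conj {m : Type*} [Fintype m] (X : Matrix n m ℂ) :
    (X.map (starRingEnd ℂ)).rank = X.rank := by
  have : X.map (starRingEnd ℂ) = Xᴴᵀ := by
    ext i j; simp [Matrix.conjTranspose_apply, Matrix.map_apply]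
  rw [this, Matrix.rank_transpose, Matrix.rank_conjTranspose]

end aux

lemma conj_map_eq {n m : Type*} (X : Matrix n m ℂ) :
    X.map (starRingEnd ℂ) = Xᴴᵀ := by
  ext i j
  simp [Matrix.conjTranspose_apply, Matrix.map_apply]

/- STATEMENT 7 (Proposition 2): with R_x Hermitian positive definite, the
Fisher information matrix F̂ = (2T/σ²)·R((conj(Φ)conj(G)R_xᵀGᵀΦᵀ) ⊗ (conj(Φ)conj(G)GᵀΦᵀ))
is invertible if and only if rank(G) = N; in particular, if rank(G) < N then
F̂ is singular. -/
theorem fim_extended_invertible_iff_full_rank {N M : ℕ}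
    (T σ : ℝ) (hT : 0 < T) (hσ : 0 < σ)
    (G : Matrix (Fin N) (Fin M) ℂ)
    (Rx : Matrix (Fin M) (Fin M) ℂ) (hRx : Rx.PosDef)
    (φ : Fin N → ℂ) (hφ : ∀ i, ‖φ i‖ = 1)
    (Φ : Matrix (Fin N) (Fin N) ℂ) (hΦ : Φ = Matrix.diagonal φ)
    (Fhat : Matrix ((Fin N × Fin N) ⊕ (Fin N × Fin N))
                   ((Fin N × Fin N) ⊕ (Fin N × Fin N)) ℝ)
    (hFhat : Fhat = (2 * T / σ ^ 2) •
      realify ((Φ.map (starRingEnd ℂ) * G.map (starRingEnd ℂ) * Rxᵀ * Gᵀ * Φᵀ) ⊗ₖ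
               (Φ.map (starRingEnd ℂ) * G.map (starRingEnd ℂ) * Gᵀ * Φᵀ))) :
    (IsUnit Fhat.det ↔ G.rank = N) ∧
      (G.rank < N → Fhat.det = 0) := by
  -- notation
  set Gc : Matrix (Fin N) (Fin M) ℂ := G.map (starRingEnd ℂ) with hGc
  set A : Matrix (Fin N) (Fin N) ℂ :=
    Φ.map (starRingEnd ℂ) * Gc * Rxᵀ * Gᵀ * Φᵀ with hAdef
  set B : Matrix (Fin N) (Fin N) ℂ :=
    Φ.map (starRingEnd ℂ) * Gc * Gᵀ * Φᵀ with hBdef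
  have hφ0 : ∀ i, φ i ≠ 0 := by
    intro i h
    have := hφ i
    rw [h] at this
    simp at this
  -- determinants of the phase matrices
  have hΦt : IsUnit (Φᵀ).det := by
    rw [hΦ, Matrix.diagonal_transpose, Matrix.det_diagonal]
    exact isUnit_iff_ne_zero.mpr (Finset.prod_ne_zero_iff.mpr fun i _ => hφ0 i)
  have hΦc : IsUnit (Φ.map (starRingEnd ℂ)).det := by
    rw [hΦ, Matrix.diagonal_map (map_zero _), Matrix.det_diagonal]
    refine isUnit_iff_ne_zero.mpr (Finset.prod_ne_zero_iff.mpr fun i _ => ?_)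
    simpa using hφ0 i
  -- the square root of Rx
  set S : Matrix (Fin M) (Fin M) ℂ := (open scoped MatrixOrder in CFC.sqrt Rx) with hSdef
  have hSS : S * S = Rx := open scoped MatrixOrder in CFC.sqrt_mul_sqrt_self Rx hRx.posSemidef.nonneg
  have hSH : Sᴴ = S := open scoped MatrixOrder in (CFC.sqrt_nonneg Rx).posSemidef.1
  have hdetS : IsUnit S.det := by
    refine isUnit_iff_ne_zero.mpr fun h => ?_
    have : Rx.det = 0 := by rw [← hSS, Matrix.det_mul, h, mul_zero]
    exact hRx.det_pos.ne' this
  have hrankRx : (G * Rx * Gᴴ).rank = G.rank := by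
    have hGS : G * Rx * Gᴴ = (G * S) * (G * S)ᴴ := by
      rw [Matrix.conjTranspose_mul, hSH]
      calc G * Rx * Gᴴ = G * (S * S) * Gᴴ := by rw [hSS]
        _ = G * S * (S * Gᴴ) := by simp only [Matrix.mul_assoc]
    rw [hGS, Matrix.rank_self_mul_conjTranspose,
      Matrix.rank_mul_eq_left_of_isUnit_det S G hdetS]
  -- rank of A
  have hrankA : A.rank = G.rank := by
    have h1 : A = Φ.map (starRingEnd ℂ) * (Gc * Rxᵀ * Gᵀ) * Φᵀ := by
      rw [hAdef]; simp only [Matrix.mul_assoc]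
    have h2 : Gc * Rxᵀ * Gᵀ = (G * Rx * Gᴴ)ᵀ := by
      rw [Matrix.transpose_mul, Matrix.transpose_mul, ← Matrix.mul_assoc]
      congr 2
    rw [h1, Matrix.rank_mul_eq_left_of_isUnit_det _ _ hΦt,
      Matrix.rank_mul_eq_right_of_isUnit_det _ _ hΦc, h2,
      Matrix.rank_transpose, hrankRx]
  -- rank of B
  have hrankB : B.rank = G.rank := by
    have h1 : B = Φ.map (starRingEnd ℂ) * (Gc * Gᵀ) * Φᵀ := by
      rw [hBdef]; simp only [Matrix.mul_assoc]
    have h2 : Gc * Gᵀ = (G * Gᴴ)ᵀ := by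
      rw [Matrix.transpose_mul]
      congr 1
    rw [h1, Matrix.rank_mul_eq_left_of_isUnit_det _ _ hΦt,
      Matrix.rank_mul_eq_right_of_isUnit_det _ _ hΦc, h2,
      Matrix.rank_transpose, Matrix.rank_self_mul_conjTranspose]
  -- determinant characterizations
  have hdA : A.det ≠ 0 ↔ G.rank = N := by
    rw [← rank_eq_card_iff_det_ne_zero, hrankA, Fintype.card_fin]
  have hdB : B.det ≠ 0 ↔ G.rank = N := by
    rw [← rank_eq_card_iff_det_ne_zero, hrankB, Fintype.card_fin]
  -- the determinant of Fhat
  set c : ℝ := 2 * T / σ ^ 2 with hc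
  have hcpos : 0 < c := by positivity
  have hFdet : Fhat.det =
      c ^ Fintype.card ((Fin N × Fin N) ⊕ (Fin N × Fin N)) *
        Complex.normSq ((A ⊗ₖ B).det) := by
    rw [hFhat, Matrix.det_smul, det_realify]
  have hK : (A ⊗ₖ B).det = A.det ^ N * B.det ^ N := by
    rw [Matrix.det_kronecker]; simp
  have hmain : IsUnit Fhat.det ↔ G.rank = N := by
    rw [isUnit_iff_ne_zero, hFdet, mul_ne_zero_iff]
    constructor
    · rintro ⟨-, h2⟩
      rcases Nat.eq_zero_or_pos N with hN | hN
      · subst hN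
        have := Matrix.rank_le_card_height G
        simpa using this
      · have hNN : N ≠ 0 := hN.ne'
        have h3 : (A ⊗ₖ B).det ≠ 0 := fun h => h2 (by rw [h]; simp)
        rw [hK] at h3
        rcases mul_ne_zero_iff.mp h3 with ⟨hA4, -⟩
        exact hdA.mp (fun h => hA4 (by rw [h]; exact zero_pow hNN))
    · intro h
      refine ⟨pow_ne_zero _ hcpos.ne', fun hcontr => ?_⟩
      rw [Complex.normSq_eq_zero, hK] at hcontr
      exact mul_ne_zero (pow_ne_zero _ (hdA.mpr h)) (pow_ne_zero _ (hdB.mpr h)) hcontr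
  refine ⟨hmain, fun hlt => ?_⟩
  by_contra hne
  exact absurd (hmain.mp (isUnit_iff_ne_zero.mpr hne)) (by omega)
end

section
/- Let J be an N×N Hermitian positive definite complex matrix with diagonal entries J_{ii} (which are real and positive). Then tr(J⁻¹) ≥ Σ_{i=1}^{N} 1/J_{ii}, and equality holds if and only if J is a diagonal matrix. (Lemma 3 of the paper.) -/
open Matrix
open scoped ComplexOrder

/-!
Fix `i` and put `w = eᵢ - Jᵢᵢ⁻¹ · (column i of J)`. Expanding the Hermitian form of `J⁻¹` gives
`(J⁻¹)ᵢᵢ - Jᵢᵢ⁻¹ = wᴴ J⁻¹ w`, which is nonnegative since `J⁻¹` is positive definite, and vanishes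
exactly when `w = 0`, i.e. when column `i` of `J` is zero off the diagonal. Summing over `i`
gives the inequality for the traces, with equality iff this holds for every column, i.e. iff `J`
is diagonal.
-/

namespace Matrix

theorem IsHermitian.star_dotProduct_mulVec {n R : Type*} [Fintype n] [NonUnitalSemiring R]
    [StarRing R] {A : Matrix n n R} (hA : A.IsHermitian) (v w : n → R) :
    star v ⬝ᵥ A *ᵥ w = star (A *ᵥ v) ⬝ᵥ w := by
  rw [dotProduct_mulVec, star_mulVec, hA.eq]

variable {n K : Type*} [DecidableEq n] [Field K]

theorem single_sub_inv_smul_col_eq_zero_iff {J : Matrix n n K} {i : n} (hJ : J i i ≠ 0) :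
    Pi.single i 1 - (J i i)⁻¹ • J.col i = 0 ↔ ∀ j ≠ i, J j i = 0 := by
  rw [funext_iff]
  refine forall_congr' fun j => ?_
  rcases eq_or_ne j i with rfl | hj
  · simp [hJ]
  · simp [hj, hJ]

variable [Fintype n] [StarRing K]

theorem IsHermitian.diag_inv_sub_inv_diag_eq {J : Matrix n n K} (hJ : J.IsHermitian)
    (hJu : IsUnit J) (i : n) :
    J⁻¹ i i - (J i i)⁻¹ = star (Pi.single i 1 - (J i i)⁻¹ • J.col i) ⬝ᵥ
      J⁻¹ *ᵥ (Pi.single i 1 - (J i i)⁻¹ • J.col i) := by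
  set w := Pi.single i 1 - (J i i)⁻¹ • J.col i
  have hJw : J⁻¹ *ᵥ w = J⁻¹ *ᵥ Pi.single i 1 - (J i i)⁻¹ • Pi.single i 1 := by
    rw [mulVec_sub, mulVec_smul, ← mulVec_single_one, mulVec_mulVec,
      nonsing_inv_mul J (J.isUnit_iff_isUnit_det.mp hJu), one_mulVec]
  have hw_single : star w ⬝ᵥ Pi.single i 1 = 1 - (J i i)⁻¹ * J i i := by
    simp [w, dotProduct_single, hJ.apply i i]
  have hw_inv_single : star w ⬝ᵥ J⁻¹ *ᵥ Pi.single i 1 = J⁻¹ i i - (J i i)⁻¹ := by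
    rw [hJ.inv.star_dotProduct_mulVec, hJw, dotProduct_single]
    simp [hJ.apply i i, hJ.inv.apply i i]
  have hcancel : (J i i)⁻¹ * (1 - (J i i)⁻¹ * J i i) = 0 := by
    rcases eq_or_ne (J i i) 0 with h | h <;> simp [h]
  rw [hJw, dotProduct_sub, dotProduct_smul, hw_inv_single, hw_single, smul_eq_mul, hcancel,
    sub_zero]

variable [PartialOrder K]

namespace PosDef

theorem diag_inv_eq_inv_diag_iff {J : Matrix n n K} (hJ : J.PosDef) (i : n) :
    J⁻¹ i i = (J i i)⁻¹ ↔ ∀ j ≠ i, J j i = 0 := by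
  rw [← sub_eq_zero, hJ.isHermitian.diag_inv_sub_inv_diag_eq hJ.isUnit,
    ← single_sub_inv_smul_col_eq_zero_iff hJ.diag_pos.ne']
  constructor
  · intro h
    by_contra hw
    exact (hJ.inv.dotProduct_mulVec_pos hw).ne' h
  · intro h
    simp [h]

variable [IsOrderedAddMonoid K]

theorem inv_diag_le_diag_inv {J : Matrix n n K} (hJ : J.PosDef) (i : n) :
    (J i i)⁻¹ ≤ J⁻¹ i i := by
  rw [← sub_nonneg, hJ.isHermitian.diag_inv_sub_inv_diag_eq hJ.isUnit]
  exact hJ.inv.posSemidef.dotProduct_mulVec_nonneg _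

theorem sum_inv_diag_le_trace_inv {J : Matrix n n K} (hJ : J.PosDef) :
    ∑ i, (J i i)⁻¹ ≤ J⁻¹.trace :=
  Finset.sum_le_sum fun i _ => hJ.inv_diag_le_diag_inv i

theorem trace_inv_eq_sum_inv_diag_iff {J : Matrix n n K} (hJ : J.PosDef) :
    J⁻¹.trace = ∑ i, (J i i)⁻¹ ↔ J.IsDiag := by
  rw [eq_comm]
  refine (Finset.sum_eq_sum_iff_of_le fun i _ => hJ.inv_diag_le_diag_inv i).trans ?_
  simp only [Finset.mem_univ, true_implies, eq_comm (a := (J _ _)⁻¹),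
    hJ.diag_inv_eq_inv_diag_iff]
  exact ⟨fun h j i hji => h i j hji, fun h i j hji => h hji⟩

end PosDef

end Matrix

theorem trace_inv_ge_sum_inv_diag {N : ℕ}
    (J : Matrix (Fin N) (Fin N) ℂ) (hJ : J.PosDef) :
    (∑ i, 1 / (J i i).re) ≤ (Matrix.trace J⁻¹).re ∧
      ((Matrix.trace J⁻¹).re = ∑ i, 1 / (J i i).re ↔ J.IsDiag) := by
  have hsum : ∑ i, (J i i)⁻¹ = ((∑ i, 1 / (J i i).re : ℝ) : ℂ) := by
    push_cast [one_div]
    exact Finset.sum_congr rfl fun i _ => by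
      rw [Complex.conj_eq_iff_re.mp (hJ.isHermitian.apply i i)]
  have htrace : J⁻¹.trace = ((J⁻¹.trace).re : ℂ) :=
    (Complex.conj_eq_iff_re.mp <| by
      simpa [trace_conjTranspose] using congrArg trace hJ.inv.isHermitian.eq).symm
  rw [← Complex.real_le_real, ← Complex.ofReal_inj, ← htrace, ← hsum]
  exact ⟨hJ.sum_inv_diag_le_trace_inv, hJ.trace_inv_eq_sum_inv_diag_iff⟩
end
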